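/- arXiv:2102.02777 — 4 statements merged into one kernel-verified Lean document; each statement's English description precedes it below -/
import Mathlib

section
/- For every natural number n, the string γ(n) produced by the standard RPF natural spelling function is a Dyck word (a balanced string of parentheses). -/
/-!
Dyck words are closed under concatenation and under wrapping in a pair of parentheses, and for
`n ≥ 2` the word `γ n` is built by exactly these two operations from words `γ a` with `a < n`,
since every exponent in the factorization of `n` is smaller than `n`.
-/

/-- A Dyck word over {(,)}, encoded as `List Bool` with `true` = '(' and `false` = ')'. -/
def IsDyck (w : List Bool) : Prop :=
  (∀ k, (w.take k).count false ≤ (w.take k).count true) ∧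
    w.count true = w.count false

/-- The standard RPF natural spelling function.  `true` = '(' and `false` = ')'.
For `n ≥ 2`, `γ n` is the concatenation over `i = 0, …, m-1` of `"(" ++ γ aᵢ ++ ")"`,
where `aᵢ` is the exponent of the `i`-th prime (`Nat.nth Nat.Prime i`, 0-indexed, so the
0th prime is 2) in the factorization of `n`, and the `(m-1)`-st prime is the greatest
prime factor of `n` (so `m = Nat.count Nat.Prime (gpf n) + 1`). -/
noncomputable def gamma : ℕ → List Bool
  | 0 => []
  | 1 => [true, false]
  | (n+2) =>
    ((List.range (Nat.count Nat.Prime ((n+2).factorization.support.sup id) + 1)).map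
      (fun i => (true :: gamma ((n+2).factorization (Nat.nth Nat.Prime i))) ++ [false])).flatten
termination_by n => n
decreasing_by exact Nat.factorization_lt _ (by omega)

namespace IsDyck

theorem nil : IsDyck [] := ⟨fun k => by simp, rfl⟩

theorem append {u v : List Bool} (hu : IsDyck u) (hv : IsDyck v) : IsDyck (u ++ v) := by
  refine ⟨fun k => ?_, by simp only [List.count_append, hu.2, hv.2]⟩
  simp only [List.take_append, List.count_append]
  exact Nat.add_le_add (hu.1 k) (hv.1 _)

theorem flatten {L : List (List Bool)} (h : ∀ w ∈ L, IsDyck w) : IsDyck L.flatten := by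
  induction L with
  | nil => exact nil
  | cons w L ih =>
    rw [List.forall_mem_cons] at h
    exact h.1.append (ih h.2)

theorem wrap {w : List Bool} (hw : IsDyck w) : IsDyck (true :: w ++ [false]) := by
  refine ⟨fun k => ?_, by simp [hw.2]⟩
  cases k with
  | zero => simp
  | succ j =>
    have hclose_true : (([false] : List Bool).take (j - w.length)).count true = 0 :=
      List.count_eq_zero.2 fun h => by simpa using List.mem_of_mem_take h
    have hclose_false : (([false] : List Bool).take (j - w.length)).count false ≤ 1 :=
      List.count_le_length.trans (by simp)
    have hw_prefix := hw.1 j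
    simp only [List.cons_append, List.take_succ_cons, List.take_append, List.count_cons_self,
      List.count_cons_of_ne (by decide : true ≠ false), List.count_append, hclose_true]
    omega

end IsDyck

/-- For every natural number `n`, `γ n` is a Dyck word. -/
theorem gamma_isDyck : ∀ n : ℕ, IsDyck (gamma n) := by
  intro n
  induction n using Nat.strong_induction_on with
  | _ n ih =>
    match n with
    | 0 => rw [gamma]; exact IsDyck.nil
    | 1 => rw [gamma]; exact IsDyck.nil.wrap
    | m + 2 =>
      rw [gamma]
      refine IsDyck.flatten fun w hw => ?_
      obtain ⟨i, -, rfl⟩ := List.mem_map.1 hw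
      exact (ih _ (Nat.factorization_lt _ (by omega))).wrap
end

section
/- The standard RPF natural spelling function γ : ℕ → Σ* is injective. -/
/-! Every `γ n` with `n ≠ 0` is a concatenation of blocks `(γ a)`, one for each prime up to the
greatest prime factor of `n`, with `a` its exponent, and every `γ a` is a balanced bracket word.
A balanced word has no prefix `u)` with `u` balanced, so a concatenation of bracketed balanced
words determines its blocks. By strong induction, `γ n` thus determines the exponent list of `n`,
which determines `n`. -/

def bracket (w : List Bool) : List Bool := true :: w ++ [false]

def IsBalanced (w : List Bool) : Prop :=
  w.count false = w.count true ∧ ∀ p, p <+: w → p.count false ≤ p.count true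

namespace IsBalanced

variable {u v : List Bool}

lemma nil : IsBalanced [] := ⟨rfl, fun p hp => by simp [List.prefix_nil.mp hp]⟩

lemma append (hu : IsBalanced u) (hv : IsBalanced v) : IsBalanced (u ++ v) := by
  refine ⟨by simp [hu.1, hv.1], fun p hp => ?_⟩
  rcases List.prefix_or_prefix_of_prefix hp (List.prefix_append u v) with hpu | ⟨q, rfl⟩
  · exact hu.2 p hpu
  · have := hv.2 q ((List.prefix_append_right_inj u).mp hp)
    simp only [List.count_append, hu.1]
    omega

lemma bracket (hu : IsBalanced u) : IsBalanced (bracket u) := by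
  refine ⟨by simp [_root_.bracket, hu.1], fun p hp => ?_⟩
  rcases List.prefix_cons_iff.mp hp with rfl | ⟨q, rfl, hq⟩
  · simp
  rcases List.prefix_concat_iff.mp hq with rfl | hq
  · simp [hu.1]
  · have := hu.2 q hq
    simp only [List.count_cons_self, List.count_cons_of_ne (show true ≠ false by decide)]
    omega

lemma flatten {L : List (List Bool)} (h : ∀ w ∈ L, IsBalanced w) : IsBalanced L.flatten := by
  induction L with
  | nil => exact nil
  | cons w L ih =>
    exact (h w (by simp)).append (ih fun w' hw' => h w' (by simp [hw']))

lemma not_concat_false_prefix (hu : u.count false = u.count true) (hv : IsBalanced v) :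
    ¬ u ++ [false] <+: v := fun h => by
  have := hv.2 _ h
  simp [hu] at this

lemma eq_of_append_false_cons {s s' : List Bool} (hu : IsBalanced u) (hv : IsBalanced v)
    (h : u ++ false :: s = v ++ false :: s') : u = v := by
  have hu' : u ++ [false] <+: v ++ false :: s' := h ▸ ⟨s, by simp⟩
  have hv' : v ++ [false] <+: v ++ false :: s' := ⟨s', by simp⟩
  rcases List.prefix_or_prefix_of_prefix hu' hv' with huv | hvu
  · rcases List.prefix_concat_iff.mp huv with huv | huv
    · exact (List.append_left_inj _).mp huv
    · exact absurd huv (not_concat_false_prefix hu.1 hv)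
  · rcases List.prefix_concat_iff.mp hvu with hvu | hvu
    · exact ((List.append_left_inj _).mp hvu).symm
    · exact absurd hvu (not_concat_false_prefix hv.1 hu)

end IsBalanced

lemma flatten_map_bracket_inj : ∀ {L L' : List (List Bool)}, (∀ w ∈ L, IsBalanced w) →
    (∀ w ∈ L', IsBalanced w) → (L.map bracket).flatten = (L'.map bracket).flatten → L = L'
  | [], [], _, _, _ => rfl
  | [], _ :: _, _, _, h => by simp [bracket] at h
  | _ :: _, [], _, _, h => by simp [bracket] at h
  | u :: L, v :: L', hL, hL', h => by
    simp only [List.map_cons, List.flatten_cons, bracket, List.cons_append, List.cons.injEq,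
      true_and, List.append_assoc] at h
    obtain rfl := (hL u (by simp)).eq_of_append_false_cons (hL' v (by simp)) h
    have hrest := List.tail_eq_of_cons_eq (List.append_cancel_left h)
    rw [flatten_map_bracket_inj (fun w hw => hL w (by simp [hw]))
      (fun w hw => hL' w (by simp [hw])) hrest]

lemma List.eq_of_map_eq_map {α β : Type*} {f : α → β} :
    ∀ {A B : List α}, (∀ a ∈ A, ∀ b, f a = f b → a = b) → A.map f = B.map f → A = B
  | [], [], _, _ => rfl
  | [], _ :: _, _, h => by simp at h
  | _ :: _, [], _, h => by simp at h
  | a :: A, b :: B, hf, h => by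
    obtain ⟨hab, hAB⟩ := List.cons.inj h
    rw [hf a (by simp) b hab, eq_of_map_eq_map (fun a' ha' => hf a' (by simp [ha'])) hAB]

/-- `sup id` of the empty support is `0`, so `primeExponents 1 = [0]`: `γ 1 = (γ 0)` fits the
pattern of `gamma_eq_flatten`. -/
noncomputable def primeExponents (n : ℕ) : List ℕ :=
  (List.range (Nat.count Nat.Prime (n.factorization.support.sup id) + 1)).map
    fun i => n.factorization (Nat.nth Nat.Prime i)

lemma primeExponents_ne_nil (n : ℕ) : primeExponents n ≠ [] := by
  simp [primeExponents]

lemma primeExponents_one : primeExponents 1 = [0] := by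
  simp [primeExponents]

lemma length_primeExponents (n : ℕ) :
    (primeExponents n).length = Nat.count Nat.Prime (n.factorization.support.sup id) + 1 := by
  rw [primeExponents, List.length_map, List.length_range]

lemma lt_of_mem_primeExponents {n a : ℕ} (hn : n ≠ 0) (ha : a ∈ primeExponents n) :
    a < n := by
  obtain ⟨i, -, rfl⟩ := List.mem_map.mp ha
  exact Nat.factorization_lt _ hn

lemma primeExponents_getD_count (n : ℕ) {p : ℕ} (hp : p.Prime) :
    (primeExponents n).getD (Nat.count Nat.Prime p) 0 = n.factorization p := by
  by_cases hpg : Nat.count Nat.Prime p ≤ Nat.count Nat.Prime (n.factorization.support.sup id)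
  · rw [List.getD_eq_getElem _ _ (by rw [length_primeExponents]; omega)]
    simp only [primeExponents, List.getElem_map, List.getElem_range, Nat.nth_count hp]
  · have hgp : n.factorization.support.sup id < p :=
      lt_of_not_ge fun h => hpg (Nat.count_monotone _ h)
    have : n.factorization p = 0 :=
      Finsupp.notMem_support_iff.mp fun hp' => hgp.not_ge (Finset.le_sup (f := id) hp')
    rw [this, List.getD_eq_default _ _ (by rw [length_primeExponents]; omega)]

lemma primeExponents_injOn : Set.InjOn primeExponents {n | n ≠ 0} := fun m hm n hn h =>
  Nat.factorization_inj hm hn <| Finsupp.ext fun p => by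
    by_cases hp : p.Prime
    · rw [← primeExponents_getD_count m hp, h, primeExponents_getD_count n hp]
    · simp [Nat.factorization_eq_zero_of_not_prime _ hp]

lemma gamma_zero : gamma 0 = [] := by rw [gamma]

lemma gamma_eq_flatten {n : ℕ} (hn : n ≠ 0) :
    gamma n = (((primeExponents n).map gamma).map bracket).flatten := by
  match n, hn with
  | 1, _ => simp [primeExponents_one, gamma, bracket]
  | n + 2, _ => rw [gamma]; simp [primeExponents, List.map_map]; rfl

lemma gamma_eq_nil_iff {n : ℕ} : gamma n = [] ↔ n = 0 := by
  refine ⟨fun h => by_contra fun hn => ?_, fun h => h ▸ gamma_zero⟩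
  rw [gamma_eq_flatten hn] at h
  simp [bracket] at h
  exact primeExponents_ne_nil n (List.eq_nil_iff_forall_not_mem.mpr h)

lemma isBalanced_gamma (n : ℕ) : IsBalanced (gamma n) := by
  induction n using Nat.strong_induction_on with
  | _ n ih =>
  rcases eq_or_ne n 0 with rfl | hn
  · exact gamma_zero ▸ .nil
  rw [gamma_eq_flatten hn]
  refine IsBalanced.flatten fun w hw => ?_
  obtain ⟨a, ha, rfl⟩ : ∃ a ∈ primeExponents n, bracket (gamma a) = w := by simpa using hw
  exact (ih a (lt_of_mem_primeExponents hn ha)).bracket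

/-- The standard RPF natural spelling function is injective. -/
theorem gamma_injective : Function.Injective gamma := by
  intro m
  induction m using Nat.strong_induction_on with
  | _ m ih =>
  intro n h
  rcases eq_or_ne m 0 with rfl | hm
  · exact (gamma_eq_nil_iff.mp (h ▸ gamma_zero)).symm
  rcases eq_or_ne n 0 with rfl | hn
  · exact gamma_eq_nil_iff.mp (h.trans gamma_zero)
  rw [gamma_eq_flatten hm, gamma_eq_flatten hn] at h
  have hmap := flatten_map_bracket_inj (by simp [isBalanced_gamma]) (by simp [isBalanced_gamma]) h
  exact primeExponents_injOn hm hn <| List.eq_of_map_eq_map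
    (fun a ha => ih a (lt_of_mem_primeExponents hm ha)) hmap
end

section
/- The standard RPF natural evaluation function α : 𝒟 → ℕ is surjective. -/
/-- Length of the first chunk of `w` (smallest positive `k` such that the first `k`
symbols are balanced); `0` if no such `k` exists. -/
noncomputable def firstChunkLen (w : List Bool) : ℕ :=
  sInf {k | 0 < k ∧ (w.take k).count true = (w.take k).count false}

/-- Auxiliary evaluator: `alphaAux i w` is `∏ⱼ p_{i+j} ^ α(dⱼ)` over the chunks
`(d₀)(d₁)…` of `w`, where `α(ε) = 0`. -/
noncomputable def alphaAux (i : ℕ) (w : List Bool) : ℕ :=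
  if w = [] then 1
  else if 0 < firstChunkLen w then
    (Nat.nth Nat.Prime i) ^
        (if ((w.take (firstChunkLen w)).drop 1).dropLast = [] then 0
         else alphaAux 0 (((w.take (firstChunkLen w)).drop 1).dropLast))
      * alphaAux (i+1) (w.drop (firstChunkLen w))
  else 1
termination_by w.length
decreasing_by
  · simp only [List.length_dropLast, List.length_drop, List.length_take]
    rename_i hw _; cases w <;> simp_all <;> omega
  · simp only [List.length_drop]
    rename_i hw hc; cases w <;> simp_all <;> omega

/-- The standard RPF natural evaluation function `α : 𝒟 → ℕ`:
`α ε = 0` and `α w = ∏ᵢ pᵢ ^ α(dᵢ)` over the chunks `(dᵢ)` of `w`. -/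
noncomputable def alpha (w : List Bool) : ℕ := if w = [] then 0 else alphaAux 0 w


/-!
A Dyck word is a concatenation of chunks `(d₀)(d₁)…(dₖ)` with arbitrary Dyck words `dⱼ`, and
its value is `∏ⱼ pⱼ ^ α(dⱼ)`. So by strong induction every `n > 0` is reached: its exponents
`n.factorization pⱼ` are smaller than `n`, hence values of Dyck words `dⱼ`, and the product over
`j ≤ n` of `pⱼ ^ n.factorization pⱼ` is `n`, because every prime factor of `n` is some `pⱼ`
with `j ≤ n`.
-/

def chunk (d : List Bool) : List Bool := true :: (d ++ [false])

lemma length_chunk (d : List Bool) : (chunk d).length = d.length + 2 := by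
  simp [chunk]

lemma take_chunk_append {d rest : List Bool} {k : ℕ} (hk₀ : 0 < k) (hk : k ≤ d.length + 1) :
    (chunk d ++ rest).take k = true :: d.take (k - 1) := by
  obtain ⟨m, rfl⟩ : ∃ m, k = m + 1 := ⟨k - 1, by omega⟩
  simp [chunk, List.take_append, show m - d.length = 0 by omega]

lemma IsDyck.count_chunk {d : List Bool} (hd : IsDyck d) :
    (chunk d).count true = (chunk d).count false := by
  simp [chunk, List.count_append, hd.2]

lemma isDyck_nil : IsDyck [] := by
  constructor <;> simp

lemma IsDyck.chunk_append {d rest : List Bool} (hd : IsDyck d) (hrest : IsDyck rest) :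
    IsDyck (chunk d ++ rest) := by
  refine ⟨fun k => ?_, ?_⟩
  · rcases Nat.eq_zero_or_pos k with rfl | hk₀
    · simp
    rcases le_or_gt k (d.length + 1) with hk | hk
    · have := hd.1 (k - 1)
      rw [take_chunk_append hk₀ hk]
      simp
      omega
    · have := hrest.1 (k - (d.length + 2))
      rw [List.take_append, List.take_of_length_le (by rw [length_chunk]; omega), length_chunk]
      simp [chunk, List.count_append, hd.2]
      omega
  · rw [List.count_append, List.count_append, hd.count_chunk, hrest.2]

lemma firstChunkLen_chunk_append {d : List Bool} (hd : IsDyck d) (rest : List Bool) :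
    firstChunkLen (chunk d ++ rest) = d.length + 2 := by
  have hbal : ((chunk d ++ rest).take (d.length + 2)).count true =
      ((chunk d ++ rest).take (d.length + 2)).count false := by
    rw [List.take_left' (length_chunk d), hd.count_chunk]
  refine le_antisymm (Nat.sInf_le ⟨by omega, hbal⟩) ?_
  refine le_csInf ⟨d.length + 2, by omega, hbal⟩ fun k ⟨hk₀, hk_bal⟩ => ?_
  by_contra! hk
  -- a proper prefix `(d'` of `(d)` has one more `(` than `)`
  have := hd.1 (k - 1)
  rw [take_chunk_append hk₀ (by omega)] at hk_bal
  simp at hk_bal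
  omega

lemma alphaAux_chunk_append (i : ℕ) {d : List Bool} (hd : IsDyck d) (rest : List Bool) :
    alphaAux i (chunk d ++ rest) = Nat.nth Nat.Prime i ^ alpha d * alphaAux (i + 1) rest := by
  have hne : chunk d ++ rest ≠ [] := by simp [chunk]
  rw [alphaAux, if_neg hne, firstChunkLen_chunk_append hd, if_pos (by omega),
    List.take_left' (length_chunk d), List.drop_left' (length_chunk d)]
  simp [chunk, alpha]

lemma isDyck_flatMap_chunk {L : List (List Bool)} (hL : ∀ d ∈ L, IsDyck d) :
    IsDyck (L.flatMap chunk) := by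
  induction L with
  | nil => exact isDyck_nil
  | cons d L ih =>
    rw [List.flatMap_cons]
    exact (hL d (by simp)).chunk_append (ih fun x hx => hL x (by simp [hx]))

lemma alphaAux_flatMap_chunk {m : ℕ} (f : Fin m → List Bool) (hf : ∀ j, IsDyck (f j)) (i : ℕ) :
    alphaAux i ((List.ofFn f).flatMap chunk) =
      ∏ j : Fin m, Nat.nth Nat.Prime (i + j) ^ alpha (f j) := by
  induction m generalizing i with
  | zero => simp [alphaAux]
  | succ m ih =>
    rw [List.ofFn_succ, List.flatMap_cons, alphaAux_chunk_append i (hf 0),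
      ih _ (fun j => hf j.succ), Fin.prod_univ_succ]
    simp [add_assoc, add_comm 1]

lemma prod_nth_prime_pow_factorization {n m : ℕ} (hn : n ≠ 0) (hnm : n < m) :
    ∏ j ∈ Finset.range m, Nat.nth Nat.Prime j ^ n.factorization (Nat.nth Nat.Prime j) = n := by
  have hinj : Function.Injective (Nat.nth Nat.Prime) :=
    Nat.nth_injective Nat.infinite_setOfPred_prime
  have hsupp : n.factorization.support ⊆ (Finset.range m).image (Nat.nth Nat.Prime) := by
    intro p hp
    rw [Nat.support_factorization] at hp
    have := Nat.le_of_mem_primeFactors hp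
    exact Finset.mem_image.mpr ⟨Nat.count Nat.Prime p,
      Finset.mem_range.mpr ((Nat.count_le _).trans_lt (by omega)),
      Nat.nth_count (Nat.prime_of_mem_primeFactors hp)⟩
  rw [← Finset.prod_image (f := fun p => p ^ n.factorization p) fun a _ b _ h => hinj h,
    ← Finsupp.prod_of_support_subset _ hsupp _ (fun _ _ => pow_zero _),
    Nat.prod_factorization_pow_eq_self hn]

/-- The standard RPF natural evaluation function `α : 𝒟 → ℕ` is
surjective. -/
theorem alpha_surjective : ∀ n : ℕ, ∃ w : List Bool, IsDyck w ∧ alpha w = n := by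
  intro n
  induction n using Nat.strong_induction_on with
  | _ n ih =>
    rcases Nat.eq_zero_or_pos n with rfl | hn
    · exact ⟨[], isDyck_nil, by simp [alpha]⟩
    choose! word hword_dyck hword_alpha using ih
    let exponent : Fin (n + 1) → ℕ := fun j => n.factorization (Nat.nth Nat.Prime j)
    have hexponent : ∀ j, exponent j < n := fun j => Nat.factorization_lt _ (by omega)
    have hdyck : ∀ j, IsDyck (word (exponent j)) := fun j => hword_dyck _ (hexponent j)
    refine ⟨(List.ofFn fun j => word (exponent j)).flatMap chunk,
      isDyck_flatMap_chunk (List.forall_mem_ofFn_iff.mpr hdyck), ?_⟩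
    have hne : (List.ofFn fun j => word (exponent j)).flatMap chunk ≠ [] := by
      simp [List.ofFn_succ, chunk]
    rw [alpha, if_neg hne, alphaAux_flatMap_chunk _ hdyck]
    simp only [zero_add, hword_alpha _ (hexponent _), exponent]
    rw [Fin.prod_univ_eq_prod_range (fun j => Nat.nth Nat.Prime j ^ n.factorization _),
      prod_nth_prime_pow_factorization (by omega) (by omega)]
end

section
/- The standard RPF rational spelling function γ_ℚ : ℚ → Σ* restricted to negative rationals satisfies γ_ℚ(q) = γ_ℚ(|q|) ++ "()", and γ_ℚ is injective on ℚ. -/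
/-- The exponent of the `i`-th prime (0-indexed) in the rational prime factorization
of `q`. -/
noncomputable def qExp (q : ℚ) (i : ℕ) : ℤ :=
  (q.num.natAbs.factorization (Nat.nth Nat.Prime i) : ℤ)
    - (q.den.factorization (Nat.nth Nat.Prime i) : ℤ)

/-- The defining recursion for the standard RPF rational spelling function:
`γ_ℚ 0 = ε`, `γ_ℚ 1 = "()"`, `γ_ℚ q = γ_ℚ |q| ++ "()"` for `q < 0`, and for positive
`q ≠ 1`, `γ_ℚ q = ⊕_{i<m} ("(" ++ γ_ℚ aᵢ ++ ")")` where `aᵢ = qExp q i` and the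
`(m-1)`-st prime is the greatest prime base of `q` (the largest prime dividing
numerator or denominator). -/
def GammaQSpec (g : ℚ → List Bool) : Prop :=
  g 0 = [] ∧ g 1 = [true, false] ∧
  (∀ q : ℚ, q < 0 → g q = g |q| ++ [true, false]) ∧
  (∀ q : ℚ, 0 < q → q ≠ 1 →
    g q = ((List.range (Nat.count Nat.Prime
          ((q.num.natAbs * q.den).factorization.support.sup id) + 1)).map
      (fun i => (true :: g ((qExp q i : ℤ) : ℚ)) ++ [false])).flatten)

/-!
`γ_ℚ` is defined by well-founded recursion on `2 |num q| den q + [q < 0]`: every exponent of `q`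
is smaller than `|num q| den q` in absolute value, and passing from `q < 0` to `|q|` drops the
sign bit.

Every spelling is a balanced parenthesis word, and a concatenation of blocks `"(" ++ u ++ ")"`
with `u` balanced determines the list of the `u`s, since no such block is a proper prefix of
another. Injectivity then follows by induction: `0` and `1` are spelled `ε` and `"()"`; a negative
spelling is a nonempty word followed by `"()"`, whereas a positive `q ≠ 1` ends in `"))"` because
its exponent at the greatest prime is nonzero; and two positive spellings with the same blocks
have the same exponents, which determine a positive rational.
-/

theorem List.eq_of_map_eq {α β : Type*} {f : α → β} {l₁ l₂ : List α}
    (hf : ∀ a ∈ l₁, ∀ b ∈ l₂, f a = f b → a = b) (h : l₁.map f = l₂.map f) : l₁ = l₂ := by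
  induction l₁ generalizing l₂ with
  | nil => simpa [eq_comm] using h
  | cons a l₁ ih =>
    cases l₂ with
    | nil => simp at h
    | cons b l₂ =>
      simp only [List.map_cons, List.cons.injEq] at h
      simp only [List.mem_cons, forall_eq_or_imp] at hf
      rw [hf.1.1 h.1, ih (fun a ha b hb => (hf.2 a ha).2 b hb) h.2]

namespace GammaQ

-- `true` is `(` and `false` is `)`.
def wrap (u : List Bool) : List Bool := (true :: u) ++ [false]

def balance (w : List Bool) : ℤ := w.count true - w.count false

@[simp] lemma balance_nil : balance [] = 0 := by simp [balance]

@[simp] lemma balance_cons (b : Bool) (w : List Bool) :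
    balance (b :: w) = (if b then 1 else -1) + balance w := by
  cases b <;> simp [balance] <;> ring

@[simp] lemma balance_append (u v : List Bool) : balance (u ++ v) = balance u + balance v := by
  simp only [balance, List.count_append]; push_cast; ring

def IsBalanced (w : List Bool) : Prop := balance w = 0 ∧ ∀ n, 0 ≤ balance (w.take n)

lemma isBalanced_nil : IsBalanced [] := ⟨balance_nil, fun n => by simp⟩

lemma IsBalanced.append {u v : List Bool} (hu : IsBalanced u) (hv : IsBalanced v) :
    IsBalanced (u ++ v) := by
  refine ⟨by simp [hu.1, hv.1], fun n => ?_⟩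
  rw [List.take_append, balance_append]
  linarith [hu.2 n, hv.2 (n - u.length)]

lemma IsBalanced.wrap {u : List Bool} (hu : IsBalanced u) : IsBalanced (wrap u) := by
  refine ⟨by simp [GammaQ.wrap, hu.1], fun n => ?_⟩
  cases n with
  | zero => simp
  | succ n =>
    have hfalse : -1 ≤ balance ([false].take (n - u.length)) := by
      cases n - u.length <;> simp
    simp only [GammaQ.wrap, List.cons_append, List.take_succ_cons, balance_cons, List.take_append,
      balance_append, if_true]
    linarith [hu.2 n]

lemma isBalanced_flatten {L : List (List Bool)} (h : ∀ w ∈ L, IsBalanced w) :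
    IsBalanced L.flatten := by
  induction L with
  | nil => exact isBalanced_nil
  | cons w L ih =>
    simp only [List.mem_cons, forall_eq_or_imp] at h
    exact h.1.append (ih h.2)

lemma length_le_of_append_false_eq {u v s t : List Bool} (hu : balance u = 0)
    (hv : IsBalanced v) (h : u ++ false :: s = v ++ false :: t) : v.length ≤ u.length := by
  by_contra! hlt
  have hprefix : u ++ [false] = v.take (u.length + 1) := by
    have := congrArg (List.take (u.length + 1)) h
    rwa [List.take_append_of_le_length (l₁ := v) (by omega), List.take_append,
      List.take_of_length_le (by omega), Nat.add_sub_cancel_left] at this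
  have := hv.2 (u.length + 1)
  rw [← hprefix] at this
  simp [hu] at this

lemma wrap_append_inj {u v s t : List Bool} (hu : IsBalanced u) (hv : IsBalanced v)
    (h : wrap u ++ s = wrap v ++ t) : u = v ∧ s = t := by
  have h' : u ++ false :: s = v ++ false :: t := by simpa [GammaQ.wrap] using h
  have hlen := le_antisymm (length_le_of_append_false_eq hv.1 hu h'.symm)
    (length_le_of_append_false_eq hu.1 hv h')
  obtain ⟨huv, hst⟩ := List.append_inj h' hlen
  exact ⟨huv, List.cons_injective hst⟩

lemma eq_of_flatten_map_wrap_eq {L₁ L₂ : List (List Bool)} (h₁ : ∀ w ∈ L₁, IsBalanced w)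
    (h₂ : ∀ w ∈ L₂, IsBalanced w) (h : (L₁.map wrap).flatten = (L₂.map wrap).flatten) :
    L₁ = L₂ := by
  induction L₁ generalizing L₂ with
  | nil => cases L₂ <;> simp_all [GammaQ.wrap]
  | cons u L₁ ih =>
    cases L₂ with
    | nil => simp [GammaQ.wrap] at h
    | cons v L₂ =>
      simp only [List.mem_cons, forall_eq_or_imp] at h₁ h₂
      simp only [List.map_cons, List.flatten_cons] at h
      obtain ⟨rfl, hrest⟩ := wrap_append_inj h₁.1 h₂.1 h
      rw [ih h₁.2 h₂.2 hrest]

lemma natAbs_qExp_lt {q : ℚ} (hq : q ≠ 0) (i : ℕ) :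
    (qExp q i).natAbs < q.num.natAbs * q.den := by
  set p := Nat.nth Nat.Prime i
  set a := q.num.natAbs.factorization p
  set b := q.den.factorization p
  have hp : 2 ≤ p := (Nat.prime_nth_prime i).two_le
  calc (qExp q i).natAbs ≤ a + b := by simpa [qExp] using Int.natAbs_sub_le (a : ℤ) b
    _ < 2 ^ a * 2 ^ b := by rw [← pow_add]; exact Nat.lt_two_pow_self
    _ ≤ p ^ a * p ^ b := by gcongr
    _ ≤ q.num.natAbs * q.den :=
      Nat.mul_le_mul (Nat.ordProj_le _ (by simpa using hq)) (Nat.ordProj_le _ q.den_nz)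

lemma factorization_num_eq_zero_or_factorization_den_eq_zero (q : ℚ) (p : ℕ) :
    q.num.natAbs.factorization p = 0 ∨ q.den.factorization p = 0 := by
  have hdisj := q.reduced.disjoint_primeFactors
  rw [← Nat.support_factorization, ← Nat.support_factorization] at hdisj
  by_contra! h
  exact Finset.disjoint_left.1 hdisj (Finsupp.mem_support_iff.2 h.1)
    (Finsupp.mem_support_iff.2 h.2)

noncomputable def maxPrimeIndex (q : ℚ) : ℕ :=
  Nat.count Nat.Prime ((q.num.natAbs * q.den).factorization.support.sup id)

lemma qExp_eq_zero_of_maxPrimeIndex_lt {q : ℚ} {i : ℕ} (hi : maxPrimeIndex q < i) :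
    qExp q i = 0 := by
  rcases eq_or_ne q 0 with rfl | hq
  · simp [qExp]
  set p := Nat.nth Nat.Prime i
  have hpi : Nat.count Nat.Prime p = i := Nat.count_nth_of_infinite Nat.infinite_setOfPred_prime i
  have hp : p ∉ (q.num.natAbs * q.den).factorization.support := fun hmem =>
    (Nat.count_monotone Nat.Prime (Finset.le_sup (f := id) hmem)).not_gt (hpi ▸ hi)
  rw [Finsupp.notMem_support_iff, Nat.factorization_mul (by simpa using hq) q.den_nz,
    Finsupp.add_apply, Nat.add_eq_zero_iff] at hp
  simp [qExp, p, hp.1, hp.2]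

lemma one_lt_natAbs_num_mul_den {q : ℚ} (h0 : 0 < q) (h1 : q ≠ 1) :
    1 < q.num.natAbs * q.den := by
  have hnum : 0 < q.num := Rat.num_pos.2 h0
  by_contra! hle
  have hone : q.num.natAbs * q.den = 1 := le_antisymm hle (Nat.pos_of_ne_zero (by positivity))
  rw [mul_eq_one] at hone
  exact h1 (Rat.ext (by rw [Rat.num_one]; omega) hone.2)

lemma qExp_maxPrimeIndex_ne_zero {q : ℚ} (h0 : 0 < q) (h1 : q ≠ 1) :
    qExp q (maxPrimeIndex q) ≠ 0 := by
  have hne : (q.num.natAbs * q.den).factorization.support.Nonempty := by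
    rw [Nat.support_factorization]
    exact Nat.nonempty_primeFactors.2 (one_lt_natAbs_num_mul_den h0 h1)
  obtain ⟨P, hP, hPsup⟩ := Finset.exists_mem_eq_sup _ hne id
  have hPp : P.Prime := Nat.prime_of_mem_primeFactors (Nat.support_factorization _ ▸ hP)
  rw [Finsupp.mem_support_iff, Nat.factorization_mul (by positivity) q.den_nz,
    Finsupp.add_apply] at hP
  rw [qExp, maxPrimeIndex, hPsup, id, Nat.nth_count hPp]
  rcases factorization_num_eq_zero_or_factorization_den_eq_zero q P with h | h <;> omega

lemma eq_of_qExp_eq {q₁ q₂ : ℚ} (h₁ : 0 < q₁) (h₂ : 0 < q₂) (h : ∀ i, qExp q₁ i = qExp q₂ i) :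
    q₁ = q₂ := by
  have hfact : ∀ p, q₁.num.natAbs.factorization p = q₂.num.natAbs.factorization p ∧
      q₁.den.factorization p = q₂.den.factorization p := by
    intro p
    by_cases hp : p.Prime
    · have hp' := h (Nat.count Nat.Prime p)
      rw [qExp, qExp, Nat.nth_count hp] at hp'
      rcases factorization_num_eq_zero_or_factorization_den_eq_zero q₁ p with h | h <;>
        rcases factorization_num_eq_zero_or_factorization_den_eq_zero q₂ p with h' | h' <;>
        omega
    · simp [Nat.factorization_eq_zero_of_not_prime _ hp]
  have hnum := Nat.eq_of_factorization_eq (by simpa using h₁.ne') (by simpa using h₂.ne')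
    fun p => (hfact p).1
  have hden := Nat.eq_of_factorization_eq q₁.den_nz q₂.den_nz fun p => (hfact p).2
  have := Rat.num_pos.2 h₁
  have := Rat.num_pos.2 h₂
  exact Rat.ext (by omega) hden

noncomputable def exponents (q : ℚ) : List ℚ :=
  (List.range (maxPrimeIndex q + 1)).map fun i => (qExp q i : ℚ)

lemma eq_of_exponents_eq {q₁ q₂ : ℚ} (h₁ : 0 < q₁) (h₂ : 0 < q₂)
    (h : exponents q₁ = exponents q₂) : q₁ = q₂ := by
  have hM : maxPrimeIndex q₁ = maxPrimeIndex q₂ := by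
    simpa [exponents] using congrArg List.length h
  refine eq_of_qExp_eq h₁ h₂ fun i => ?_
  rcases le_or_gt i (maxPrimeIndex q₁) with hi | hi
  · rw [exponents, exponents, ← hM] at h
    exact_mod_cast List.map_inj_left.1 h i (List.mem_range.2 (Nat.lt_succ_of_le hi))
  · rw [qExp_eq_zero_of_maxPrimeIndex_lt hi, qExp_eq_zero_of_maxPrimeIndex_lt (hM ▸ hi)]

def size (q : ℚ) : ℕ := 2 * (q.num.natAbs * q.den) + if q < 0 then 1 else 0

lemma size_abs_lt {q : ℚ} (hq : q < 0) : size |q| < size q := by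
  simp [size, abs_of_neg hq, hq, hq.le]

lemma size_qExp_lt {q : ℚ} (hq : q ≠ 0) (i : ℕ) : size (qExp q i : ℚ) < size q := by
  have := natAbs_qExp_lt hq i
  simp only [size, Rat.num_intCast, Rat.den_intCast, mul_one]
  split_ifs <;> omega

noncomputable def gamma (q : ℚ) : List Bool :=
  if hq : q = 0 then []
  else if q = 1 then [true, false]
  else if hneg : q < 0 then gamma |q| ++ [true, false]
  else ((List.range (maxPrimeIndex q + 1)).map fun i => wrap (gamma (qExp q i))).flatten
termination_by size q
decreasing_by
  · exact size_abs_lt hneg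
  · exact size_qExp_lt hq i

lemma gamma_zero : gamma 0 = [] := by
  rw [gamma]; simp

lemma gamma_one : gamma 1 = [true, false] := by
  rw [gamma]; simp

lemma gamma_of_neg {q : ℚ} (hq : q < 0) : gamma q = gamma |q| ++ [true, false] := by
  rw [gamma]; simp [hq.ne, (hq.trans one_pos).ne, hq]

lemma gamma_of_pos {q : ℚ} (h0 : 0 < q) (h1 : q ≠ 1) :
    gamma q = (((exponents q).map gamma).map wrap).flatten := by
  rw [gamma, dif_neg h0.ne', if_neg h1, dif_neg h0.not_gt, exponents, List.map_map,
    List.map_map]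
  rfl

lemma gammaQSpec_gamma : GammaQSpec gamma := by
  refine ⟨gamma_zero, gamma_one, fun _ => gamma_of_neg, fun q h0 h1 => ?_⟩
  rw [gamma_of_pos h0 h1, exponents, List.map_map, List.map_map]
  rfl

lemma size_lt_of_mem_exponents {q a : ℚ} (hq : q ≠ 0) (ha : a ∈ exponents q) :
    size a < size q := by
  obtain ⟨i, -, rfl⟩ := List.mem_map.1 ha
  exact size_qExp_lt hq i

lemma isBalanced_gamma (q : ℚ) : IsBalanced (gamma q) := by
  rcases eq_or_ne q 0 with rfl | h0
  · rw [gamma_zero]; exact isBalanced_nil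
  rcases eq_or_ne q 1 with rfl | h1
  · rw [gamma_one]; exact isBalanced_nil.wrap
  rcases h0.lt_or_gt with hneg | hpos
  · rw [gamma_of_neg hneg]
    exact (isBalanced_gamma |q|).append isBalanced_nil.wrap
  · rw [gamma_of_pos hpos h1, List.map_map]
    refine isBalanced_flatten fun w hw => ?_
    obtain ⟨a, ha, rfl⟩ := List.mem_map.1 hw
    exact (isBalanced_gamma a).wrap
termination_by size q
decreasing_by
  · exact size_abs_lt hneg
  · exact size_lt_of_mem_exponents h0 ha

lemma exists_gamma_eq_append_wrap {q : ℚ} (h0 : 0 < q) (h1 : q ≠ 1) :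
    ∃ w, gamma q = w ++ wrap (gamma (qExp q (maxPrimeIndex q))) := by
  rw [gamma_of_pos h0 h1, exponents, List.range_succ]
  simp

lemma exists_gamma_eq_append_false {q : ℚ} (hq : q ≠ 0) : ∃ w, gamma q = w ++ [false] := by
  rcases eq_or_ne q 1 with rfl | h1
  · exact ⟨[true], gamma_one⟩
  rcases hq.lt_or_gt with hneg | hpos
  · exact ⟨gamma |q| ++ [true], by simp [gamma_of_neg hneg]⟩
  · obtain ⟨w, hw⟩ := exists_gamma_eq_append_wrap hpos h1
    exact ⟨w ++ true :: gamma (qExp q (maxPrimeIndex q)), by simp [hw, wrap]⟩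

lemma exists_gamma_eq_append_false_false {q : ℚ} (h0 : 0 < q) (h1 : q ≠ 1) :
    ∃ w, gamma q = w ++ [false, false] := by
  obtain ⟨w, hw⟩ := exists_gamma_eq_append_wrap h0 h1
  obtain ⟨u, hu⟩ := exists_gamma_eq_append_false
    (Int.cast_ne_zero.2 (qExp_maxPrimeIndex_ne_zero h0 h1))
  exact ⟨w ++ true :: u, by simp [hw, hu, wrap]⟩

lemma gamma_ne_nil {q : ℚ} (hq : q ≠ 0) : gamma q ≠ [] := by
  obtain ⟨w, hw⟩ := exists_gamma_eq_append_false hq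
  simp [hw]

lemma gamma_eq_nil_iff {q : ℚ} : gamma q = [] ↔ q = 0 :=
  ⟨not_imp_not.1 gamma_ne_nil, fun hq => hq ▸ gamma_zero⟩

lemma append_false_false_ne_append_true_false (u v : List Bool) :
    u ++ [false, false] ≠ v ++ [true, false] := fun h => by
  simpa using (List.append_inj' h rfl).2

lemma gamma_eq_one_iff {q : ℚ} : gamma q = [true, false] ↔ q = 1 := by
  refine ⟨fun h => ?_, fun hq => hq ▸ gamma_one⟩
  by_contra h1
  rcases lt_trichotomy q 0 with hneg | rfl | hpos
  · rw [gamma_of_neg hneg, List.append_left_eq_self] at h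
    exact gamma_ne_nil (abs_ne_zero.2 hneg.ne) h
  · simp [gamma_zero] at h
  · obtain ⟨w, hw⟩ := exists_gamma_eq_append_false_false hpos h1
    exact append_false_false_ne_append_true_false w [] (hw ▸ h)

lemma neg_of_gamma_eq {q₁ q₂ : ℚ} (h₁ : q₁ < 0) (h : gamma q₁ = gamma q₂) : q₂ < 0 := by
  by_contra! h₂
  rcases h₂.eq_or_lt with rfl | hpos
  · exact h₁.ne (gamma_eq_nil_iff.1 (h.trans gamma_zero))
  rcases eq_or_ne q₂ 1 with rfl | h1
  · exact (h₁.trans one_pos).ne (gamma_eq_one_iff.1 (h.trans gamma_one))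
  obtain ⟨w, hw⟩ := exists_gamma_eq_append_false_false hpos h1
  rw [gamma_of_neg h₁, hw] at h
  exact append_false_false_ne_append_true_false w _ h.symm

theorem eq_of_gamma_eq {q₁ q₂ : ℚ} (h : gamma q₁ = gamma q₂) : q₁ = q₂ := by
  rcases lt_trichotomy q₁ 0 with hneg | rfl | hpos
  · have hneg₂ := neg_of_gamma_eq hneg h
    rw [gamma_of_neg hneg, gamma_of_neg hneg₂] at h
    have habs := eq_of_gamma_eq (List.append_cancel_right h)
    rwa [abs_of_neg hneg, abs_of_neg hneg₂, neg_inj] at habs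
  · exact (gamma_eq_nil_iff.1 (h.symm.trans gamma_zero)).symm
  rcases eq_or_ne q₁ 1 with rfl | h1
  · exact (gamma_eq_one_iff.1 (h.symm.trans gamma_one)).symm
  have hpos₂ : 0 < q₂ := by
    rcases lt_trichotomy q₂ 0 with hneg₂ | rfl | hpos₂
    · exact absurd (neg_of_gamma_eq hneg₂ h.symm) hpos.not_gt
    · exact absurd (gamma_eq_nil_iff.1 (h.trans gamma_zero)) hpos.ne'
    · exact hpos₂
  have h1₂ : q₂ ≠ 1 := fun h1₂ => h1 (gamma_eq_one_iff.1 (h.trans (h1₂ ▸ gamma_one)))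
  rw [gamma_of_pos hpos h1, gamma_of_pos hpos₂ h1₂] at h
  have hexp := eq_of_flatten_map_wrap_eq (by simp [isBalanced_gamma])
    (by simp [isBalanced_gamma]) h
  refine eq_of_exponents_eq hpos hpos₂ (List.eq_of_map_eq (fun a ha b _ hab => ?_) hexp)
  exact eq_of_gamma_eq hab
termination_by size q₁
decreasing_by
  · exact size_abs_lt hneg
  · exact size_lt_of_mem_exponents hpos.ne' ha

end GammaQ

/-- The standard RPF rational spelling function `γ_ℚ` (a function
satisfying its defining recursion, `GammaQSpec`) satisfies
`γ_ℚ q = γ_ℚ |q| ++ "()"` for negative `q`, and is injective on `ℚ`. -/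
theorem gammaQ_neg_and_injective :
    ∃ g : ℚ → List Bool, GammaQSpec g ∧
      (∀ q : ℚ, q < 0 → g q = g |q| ++ [true, false]) ∧
      Function.Injective g :=
  ⟨GammaQ.gamma, GammaQ.gammaQSpec_gamma, fun _ => GammaQ.gamma_of_neg,
    fun _ _ => GammaQ.eq_of_gamma_eq⟩
end
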